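/- Let (Z_t)_{t ∈ ℤ} be a stationary 𝒵-valued process with β-mixing coefficients β(k), let a, μ ≥ 1 be integers with n = 2aμ, let M > 0, let B and p be positive integers, and let ℱ be a finite set of measurable functions from 𝒵 to [0, M] with cardinality at most 2^{Bp}. Let δ ∈ (0,1) be such that δ' = δ − 2(μ − 1)β(a) > 0. Then with probability at least 1 − δ, simultaneously for all ℓ_f ∈ ℱ: E[ℓ_f(Z_1)] ≤ (1/n) Σ_{t=1}^n ℓ_f(Z_t) + M·√( 2((Bp + 1)·ln 2 + ln(1/δ')) / μ ). -/

import Mathlib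

/-!
Split the first `n = 2aμ` observations into `2μ` consecutive blocks of length `a`, and look
separately at the `μ` odd-numbered and the `μ` even-numbered blocks. Within each family two
consecutive blocks are `a` apart, so peeling the blocks off one at a time and applying the
definition of `β(a)` at each cut shows that the family is within `(μ - 1)β(a)` in total
variation of `μ` independent copies of a single block (by stationarity every block has the same
law). For independent blocks, Hoeffding's inequality for the block means of one loss, together
with a union bound over the at most `2^{Bp}` losses, bounds the probability of a deviation of
size `ε = M √(2((Bp + 1) log 2 + log(1/δ'))/μ)` by `δ'/2`. If the empirical risk of some loss
falls short of its risk by more than `ε`, then so does its average over the odd blocks or over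
the even blocks, hence the failure probability is at most `2(δ'/2 + (μ - 1)β(a)) = δ`.
-/

open MeasureTheory ProbabilityTheory

/-- Total variation distance between two measures. -/
noncomputable def tvDist {α : Type*} [MeasurableSpace α] (μ ν : Measure α) : ℝ :=
  ⨆ A : {A : Set α // MeasurableSet A}, |(μ A).toReal - (ν A).toReal|

/-- β-mixing coefficient of the process `Z` under `P`: the supremum over `t` of the
total variation distance between the joint law of `((Z s)_{s ≤ t}, (Z s)_{s ≥ t+k})`
and the product of the marginal laws. -/
noncomputable def betaMix {Ω 𝒵 : Type*} [MeasurableSpace Ω] [MeasurableSpace 𝒵]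
    (P : Measure Ω) (Z : ℤ → Ω → 𝒵) (k : ℕ) : ℝ :=
  ⨆ t : ℤ, tvDist
    (P.map (fun ω => (fun s : {s : ℤ // s ≤ t} => Z s ω,
                      fun s : {s : ℤ // t + k ≤ s} => Z s ω)))
    ((P.map (fun ω => fun s : {s : ℤ // s ≤ t} => Z s ω)).prod
      (P.map (fun ω => fun s : {s : ℤ // t + k ≤ s} => Z s ω)))

/-- Stationarity of the process `Z` under `P`. -/
def Stationary {Ω 𝒵 : Type*} [MeasurableSpace Ω] [MeasurableSpace 𝒵]
    (P : Measure Ω) (Z : ℤ → Ω → 𝒵) : Prop :=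
  ∀ s : ℤ, P.map (fun ω => fun t : ℤ => Z (t + s) ω) = P.map (fun ω => fun t : ℤ => Z t ω)

open Real

instance MeasureTheory.Measure.prod.instIsZeroOrProbabilityMeasure {α β : Type*}
    [MeasurableSpace α] [MeasurableSpace β] {μ : Measure α} {ν : Measure β}
    [IsZeroOrProbabilityMeasure μ] [IsZeroOrProbabilityMeasure ν] :
    IsZeroOrProbabilityMeasure (μ.prod ν) := by
  rcases eq_zero_or_isProbabilityMeasure μ with rfl | _
  · simp only [Measure.zero_prod]; infer_instance
  rcases eq_zero_or_isProbabilityMeasure ν with rfl | _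
  · simp only [Measure.prod_zero]; infer_instance
  infer_instance

section TotalVariation

variable {α : Type*} [MeasurableSpace α] {μ ν : Measure α}
  [IsZeroOrProbabilityMeasure μ] [IsZeroOrProbabilityMeasure ν]

lemma abs_measureReal_sub_le_one (A : Set α) : |μ.real A - ν.real A| ≤ 1 := by
  rw [abs_sub_le_iff]
  constructor <;> linarith [measureReal_nonneg (μ := μ) (s := A),
    measureReal_nonneg (μ := ν) (s := A), measureReal_le_one (μ := μ) (s := A),
    measureReal_le_one (μ := ν) (s := A)]

lemma abs_measureReal_sub_le_tvDist {A : Set α} (hA : MeasurableSet A) :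
    |μ.real A - ν.real A| ≤ tvDist μ ν :=
  le_ciSup (f := fun A : {A : Set α // MeasurableSet A} => |(μ A).toReal - (ν A).toReal|)
    ⟨1, by rintro _ ⟨B, rfl⟩; exact abs_measureReal_sub_le_one B.1⟩ ⟨A, hA⟩

lemma tvDist_nonneg : 0 ≤ tvDist μ ν :=
  (abs_nonneg _).trans (abs_measureReal_sub_le_tvDist MeasurableSet.empty)

lemma tvDist_le_one : tvDist μ ν ≤ 1 :=
  ciSup_le fun A => abs_measureReal_sub_le_one (A : Set α)

end TotalVariation

section BetaMixing

variable {Ω 𝒵 : Type*} [MeasurableSpace Ω] [MeasurableSpace 𝒵]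
  {P : Measure Ω} [IsZeroOrProbabilityMeasure P] {Z : ℤ → Ω → 𝒵}

lemma tvDist_le_betaMix (k : ℕ) (t : ℤ) :
    tvDist
      (P.map (fun ω => (fun s : {s : ℤ // s ≤ t} => Z s ω,
                        fun s : {s : ℤ // t + k ≤ s} => Z s ω)))
      ((P.map (fun ω => fun s : {s : ℤ // s ≤ t} => Z s ω)).prod
        (P.map (fun ω => fun s : {s : ℤ // t + k ≤ s} => Z s ω)))
      ≤ betaMix P Z k := by
  apply le_ciSup _ t
  refine ⟨1, ?_⟩
  rintro _ ⟨u, rfl⟩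
  exact tvDist_le_one

lemma betaMix_nonneg (k : ℕ) : 0 ≤ betaMix P Z k :=
  (tvDist_le_betaMix k 0).trans' tvDist_nonneg

lemma abs_measureReal_map_prodMk_sub_prod_le_betaMix (hZ : ∀ t, Measurable (Z t)) (t : ℤ)
    (k : ℕ) {α β : Type*} [MeasurableSpace α] [MeasurableSpace β] {X : Ω → α} {Y : Ω → β}
    {G : ({s : ℤ // s ≤ t} → 𝒵) → α} {H : ({s : ℤ // t + k ≤ s} → 𝒵) → β}
    (hG : Measurable G) (hH : Measurable H) (hX : ∀ ω, X ω = G fun s => Z s ω)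
    (hY : ∀ ω, Y ω = H fun s => Z s ω) {A : Set (α × β)} (hA : MeasurableSet A) :
    |(P.map fun ω => (X ω, Y ω)).real A - ((P.map X).prod (P.map Y)).real A| ≤ betaMix P Z k := by
  obtain rfl : X = _ := funext hX
  obtain rfl : Y = _ := funext hY
  have hpast : Measurable fun ω (s : {s : ℤ // s ≤ t}) => Z s ω :=
    measurable_pi_lambda _ fun _ => hZ _
  have hfuture : Measurable fun ω (s : {s : ℤ // t + k ≤ s}) => Z s ω :=
    measurable_pi_lambda _ fun _ => hZ _
  have hjoint : (P.map fun ω => (G fun s => Z s ω, H fun s => Z s ω))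
      = (P.map fun ω => (fun s : {s : ℤ // s ≤ t} => Z s ω,
          fun s : {s : ℤ // t + k ≤ s} => Z s ω)).map (Prod.map G H) := by
    rw [Measure.map_map (hG.prodMap hH) (hpast.prodMk hfuture)]
    rfl
  have hprod : (P.map fun ω => G fun s => Z s ω).prod (P.map fun ω => H fun s => Z s ω)
      = ((P.map fun ω (s : {s : ℤ // s ≤ t}) => Z s ω).prod
          (P.map fun ω (s : {s : ℤ // t + k ≤ s}) => Z s ω)).map (Prod.map G H) := by
    rw [← Measure.map_prod_map _ _ hG hH, Measure.map_map hG hpast, Measure.map_map hH hfuture]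
    rfl
  rw [hjoint, hprod, map_measureReal_apply (hG.prodMap hH) hA,
    map_measureReal_apply (hG.prodMap hH) hA]
  exact (abs_measureReal_sub_le_tvDist ((hG.prodMap hH) hA)).trans (tvDist_le_betaMix k t)

end BetaMixing

lemma measureReal_prod_apply_eq_integral {α β : Type*} [MeasurableSpace α] [MeasurableSpace β]
    {μ : Measure α} {ν : Measure β} [IsFiniteMeasure ν] {A : Set (α × β)}
    (hA : MeasurableSet A) :
    (μ.prod ν).real A = ∫ x, ν.real (Prod.mk x ⁻¹' A) ∂μ := by
  rw [measureReal_def, Measure.prod_apply hA, ← integral_toReal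
    (measurable_measure_prodMk_left hA).aemeasurable (ae_of_all _ fun _ => measure_lt_top _ _)]
  rfl

lemma abs_measureReal_prod_sub_le {α β : Type*} [MeasurableSpace α] [MeasurableSpace β]
    {ρ : Measure α} [IsProbabilityMeasure ρ] {ν ν' : Measure β} [IsFiniteMeasure ν]
    [IsFiniteMeasure ν'] {c : ℝ} (h : ∀ S, MeasurableSet S → |ν.real S - ν'.real S| ≤ c)
    {A : Set (α × β)} (hA : MeasurableSet A) :
    |(ρ.prod ν).real A - (ρ.prod ν').real A| ≤ c := by
  rw [measureReal_prod_apply_eq_integral hA, measureReal_prod_apply_eq_integral hA,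
    ← integral_sub (Measure.integrable_measure_prodMk_left hA (measure_ne_top _ _))
      (Measure.integrable_measure_prodMk_left hA (measure_ne_top _ _))]
  simpa using norm_integral_le_of_norm_le_const
    (f := fun x => ν.real (Prod.mk x ⁻¹' A) - ν'.real (Prod.mk x ⁻¹' A)) (μ := ρ)
    (ae_of_all _ fun x => h _ (measurable_prodMk_left hA))

lemma two_pow_mul_exp_le_half (K : ℕ) {m : ℕ} (hm : m ≠ 0) {M δ : ℝ} (hM : 0 < M) (hδ : 0 < δ)
    (hδ1 : δ ≤ 1) :
    (2 : ℝ) ^ K * exp (-2 * (m * (M * √(2 * ((K + 1) * log 2 + log (1 / δ)) / m))) ^ 2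
      / (m * M ^ 2)) ≤ δ / 2 := by
  set L := ((K : ℝ) + 1) * log 2 + log (1 / δ)
  have hL : 0 ≤ L := add_nonneg (mul_nonneg (by positivity) (log_nonneg one_le_two))
    (log_nonneg (one_le_one_div hδ hδ1))
  have hexponent : -2 * (m * (M * √(2 * L / m))) ^ 2 / (m * M ^ 2) = -(4 * L) := by
    rw [mul_pow, mul_pow, sq_sqrt (by positivity)]
    field_simp
    ring
  have hexpL : (2 : ℝ) ^ K * exp (-L) = δ / 2 := by
    rw [neg_add, exp_add, exp_neg, exp_neg, one_div, log_inv, exp_neg, exp_log hδ, inv_inv,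
      mul_comm _ (log 2), exp_mul, exp_log two_pos, ← Nat.cast_succ, rpow_natCast, pow_succ]
    field_simp
  -- Hoeffding gives `exp (-4L)`; the stated deviation only needs `exp (-L)`.
  rw [hexponent, ← hexpL]
  gcongr
  linarith

section Hoeffding

variable {T : Type*} [MeasurableSpace T] (ρ : Measure T)

def largeDeviationSet {ι : Type*} (s : Finset ι) (g : ι → T → ℝ) (m : ℕ) (ε : ℝ) :
    Set (Fin m → T) :=
  ⋃ j ∈ s, {x | m * ε ≤ ∑ i, (∫ y, g j y ∂ρ - g j (x i))}

lemma measurableSet_largeDeviationSet {ι : Type*} {s : Finset ι} {g : ι → T → ℝ}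
    (hg : ∀ j ∈ s, Measurable (g j)) (m : ℕ) (ε : ℝ) :
    MeasurableSet (largeDeviationSet ρ s g m ε) :=
  Finset.measurableSet_biUnion _ fun j hj => measurableSet_le measurable_const <|
    Finset.measurable_sum _ fun i _ => measurable_const.sub ((hg j hj).comp (measurable_pi_apply i))

variable [IsProbabilityMeasure ρ]

lemma measureReal_pi_sum_integral_sub_ge_le {g : T → ℝ} (hg : Measurable g) {a b : ℝ}
    (hab : ∀ x, g x ∈ Set.Icc a b) (m : ℕ) {ε : ℝ} (hε : 0 ≤ ε) :
    (Measure.pi fun _ : Fin m => ρ).real {x | ε ≤ ∑ i, (∫ y, g y ∂ρ - g (x i))}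
      ≤ exp (-2 * ε ^ 2 / (m * (b - a) ^ 2)) := by
  have hsub : HasSubgaussianMGF (fun y => ∫ y, g y ∂ρ - g y) ((‖-a - -b‖₊ / 2) ^ 2) ρ := by
    refine (hasSubgaussianMGF_of_mem_Icc (a := -b) (b := -a) hg.neg.aemeasurable
      (ae_of_all _ fun x => ⟨neg_le_neg (hab x).2, neg_le_neg (hab x).1⟩)).congr
      (ae_of_all _ fun y => ?_)
    simp only [Pi.neg_apply, integral_neg]
    ring
  have hcoord (i : Fin m) : HasSubgaussianMGF (fun x : Fin m → T => ∫ y, g y ∂ρ - g (x i))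
      ((‖-a - -b‖₊ / 2) ^ 2) (Measure.pi fun _ => ρ) := by
    refine HasSubgaussianMGF.of_map (X := fun y => ∫ y, g y ∂ρ - g y)
      (measurable_pi_apply i).aemeasurable ?_
    rwa [(measurePreserving_eval (fun _ => ρ) i).map_eq]
  refine (HasSubgaussianMGF.measure_sum_ge_le_of_iIndepFun
    (iIndepFun_pi fun _ => hsub.aemeasurable) (fun i _ => hcoord i) hε).trans_eq ?_
  simp only [Finset.sum_const, Finset.card_univ, Fintype.card_fin, nsmul_eq_mul, NNReal.coe_mul,
    NNReal.coe_natCast, NNReal.coe_pow, NNReal.coe_div, coe_nnnorm, Real.norm_eq_abs,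
    NNReal.coe_ofNat]
  rw [div_pow, sq_abs, show 2 * (m * ((-a - -b) ^ 2 / 2 ^ 2)) = m * (b - a) ^ 2 / 2 by ring,
    div_div_eq_mul_div]
  congr 1
  ring

lemma measureReal_pi_largeDeviationSet_le {ι : Type*} (s : Finset ι) {g : ι → T → ℝ}
    (hg : ∀ j ∈ s, Measurable (g j)) {a b : ℝ} (hab : ∀ j ∈ s, ∀ x, g j x ∈ Set.Icc a b)
    (m : ℕ) {ε : ℝ} (hε : 0 ≤ ε) :
    (Measure.pi fun _ : Fin m => ρ).real (largeDeviationSet ρ s g m ε)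
      ≤ s.card * exp (-2 * (m * ε) ^ 2 / (m * (b - a) ^ 2)) := by
  refine (measureReal_biUnion_finset_le _ _).trans ?_
  simpa using Finset.sum_le_card_nsmul _ _ _ fun j hj =>
    measureReal_pi_sum_integral_sub_ge_le ρ (hg j hj) (hab j hj) m (by positivity)

lemma measureReal_pi_largeDeviationSet_le_half {ι : Type*} {s : Finset ι} {g : ι → T → ℝ}
    (hg : ∀ j ∈ s, Measurable (g j)) {M : ℝ} (hM : 0 < M)
    (hgM : ∀ j ∈ s, ∀ x, g j x ∈ Set.Icc 0 M) {K : ℕ} (hs : s.card ≤ 2 ^ K) {m : ℕ}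
    (hm : m ≠ 0) {δ : ℝ} (hδ : 0 < δ) (hδ1 : δ ≤ 1) :
    (Measure.pi fun _ : Fin m => ρ).real
        (largeDeviationSet ρ s g m (M * √(2 * ((K + 1) * log 2 + log (1 / δ)) / m)))
      ≤ δ / 2 := by
  refine (measureReal_pi_largeDeviationSet_le ρ s hg hgM m (by positivity)).trans ?_
  rw [sub_zero]
  refine le_trans ?_ (two_pow_mul_exp_le_half K hm hM hδ hδ1)
  gcongr
  exact_mod_cast hs

end Hoeffding

lemma Finset.sum_range_two_mul_mul {M : Type*} [AddCommMonoid M] (F : ℕ → M) (a m : ℕ) :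
    ∑ t ∈ Finset.range (2 * a * m), F t
      = ∑ i ∈ Finset.range m, (∑ r ∈ Finset.range a, F (2 * a * i + r)
          + ∑ r ∈ Finset.range a, F (2 * a * i + a + r)) := by
  induction m with
  | zero => simp
  | succ m ih =>
    rw [mul_add, mul_one, Finset.sum_range_add, ih, Finset.sum_range_succ, two_mul a,
      Finset.sum_range_add]
    simp only [add_assoc]

lemma le_sum_sub_or_le_sum_sub_of_lt {m : ℕ} (u v : Fin m → ℝ) {e ε : ℝ}
    (h : 1 / (2 * m) * ∑ i, (u i + v i) + ε < e) :
    m * ε ≤ ∑ i, (e - u i) ∨ m * ε ≤ ∑ i, (e - v i) := by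
  rcases Nat.eq_zero_or_pos m with rfl | hm
  · simp
  by_contra! hlt
  simp only [Finset.sum_sub_distrib, Finset.sum_add_distrib, Finset.sum_const, Finset.card_univ,
    Fintype.card_fin, nsmul_eq_mul] at hlt h
  have h2 := mul_lt_mul_of_pos_left h (by positivity : (0 : ℝ) < 2 * m)
  rw [mul_add, ← mul_assoc, mul_one_div_cancel (by positivity), one_mul] at h2
  linarith

lemma one_sub_le_measureReal_of_compl_subset_union {α : Type*} [MeasurableSpace α]
    {μ : Measure α} [IsProbabilityMeasure μ] {G U V : Set α} (h : Gᶜ ⊆ U ∪ V) :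
    1 - (μ.real U + μ.real V) ≤ μ.real G := by
  have hsplit : 1 ≤ μ.real G + μ.real Gᶜ := by
    simpa [Set.union_compl_self] using measureReal_union_le (μ := μ) G Gᶜ
  linarith [(measureReal_mono (μ := μ) h).trans (measureReal_union_le U V)]

noncomputable def blockMean {𝒵 : Type*} {a : ℕ} (f : 𝒵 → ℝ) (x : Fin a → 𝒵) : ℝ :=
  (∑ r, f (x r)) / a

lemma measurable_blockMean {𝒵 : Type*} [MeasurableSpace 𝒵] {f : 𝒵 → ℝ} (hf : Measurable f)
    (a : ℕ) :
    Measurable (blockMean (a := a) f) :=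
  (Finset.measurable_sum _ fun r _ => hf.comp (measurable_pi_apply r)).div_const _

lemma blockMean_mem_Icc {𝒵 : Type*} {f : 𝒵 → ℝ} {lo hi : ℝ} (hf : ∀ z, f z ∈ Set.Icc lo hi)
    {a : ℕ} (ha : a ≠ 0) (x : Fin a → 𝒵) : blockMean f x ∈ Set.Icc lo hi := by
  have haR : (0 : ℝ) < a := by positivity
  constructor
  · rw [blockMean, le_div_iff₀ haR]
    simpa [mul_comm] using Finset.card_nsmul_le_sum Finset.univ _ _ fun r _ => (hf (x r)).1
  · rw [blockMean, div_le_iff₀ haR]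
    simpa [mul_comm] using Finset.sum_le_card_nsmul Finset.univ _ _ fun r _ => (hf (x r)).2

section Blocks

variable {Ω 𝒵 : Type*} {Z : ℤ → Ω → 𝒵}

def block (Z : ℤ → Ω → 𝒵) (a : ℕ) (c : ℤ) (ω : Ω) : Fin a → 𝒵 :=
  fun r => Z (r + c) ω

-- Consecutive blocks are separated by a gap of length `a`, the lag at which `β(a)` is measured.
def blocks (Z : ℤ → Ω → 𝒵) (a : ℕ) (c : ℤ) (m : ℕ) (ω : Ω) : Fin m → Fin a → 𝒵 :=
  fun i => block Z a (2 * a * i + c) ω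

lemma blocks_succ_eq [MeasurableSpace 𝒵] (a : ℕ) (c : ℤ) (m : ℕ) :
    blocks Z a c (m + 1) = (MeasurableEquiv.piFinSuccAbove (fun _ => Fin a → 𝒵) 0).symm ∘
      fun ω => (block Z a c ω, blocks Z a (2 * a + c) m ω) := by
  funext ω i
  cases i using Fin.cases with
  | zero => simp [blocks]
  | succ j =>
    simp only [blocks, Fin.val_succ, Nat.cast_add, Nat.cast_one, Function.comp_apply,
      MeasurableEquiv.piFinSuccAbove_symm_apply, Fin.insertNthEquiv_zero, Fin.consEquiv_apply,
      Fin.cons_succ]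
    congr 1
    ring

lemma one_div_mul_sum_eq_blockMean (f : 𝒵 → ℝ) {a : ℕ} (ha : a ≠ 0) (m : ℕ) (ω : Ω) :
    1 / ((2 * a * m : ℕ) : ℝ) * ∑ t : Fin (2 * a * m), f (Z (((t : ℕ) + 1 : ℕ) : ℤ) ω)
      = 1 / (2 * m) * ∑ i, (blockMean f (blocks Z a 1 m ω i)
          + blockMean f (blocks Z a (a + 1) m ω i)) := by
  have hblock (c : ℕ) (i : Fin m) : blockMean f (blocks Z a (c + 1) m ω i)
      = (∑ r ∈ Finset.range a, f (Z ((2 * a * i + c + r + 1 : ℕ) : ℤ) ω)) / a := by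
    rw [blockMean,
      ← Fin.sum_univ_eq_sum_range (fun r => f (Z ((2 * a * i + c + r + 1 : ℕ) : ℤ) ω))]
    congr! 4 with r
    simp only [blocks, block]
    push_cast
    congr 1
    ring
  have hodd := hblock 0
  simp only [Nat.cast_zero, zero_add, add_zero] at hodd
  simp_rw [hodd, hblock a, ← add_div, ← Finset.sum_div,
    Fin.sum_univ_eq_sum_range (fun t => f (Z ((t + 1 : ℕ) : ℤ) ω)),
    Finset.sum_range_two_mul_mul,
    Fin.sum_univ_eq_sum_range (fun i =>
      ∑ r ∈ Finset.range a, f (Z ((2 * a * i + r + 1 : ℕ) : ℤ) ω)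
        + ∑ r ∈ Finset.range a, f (Z ((2 * a * i + a + r + 1 : ℕ) : ℤ) ω))]
  push_cast
  field_simp

variable [MeasurableSpace Ω] [MeasurableSpace 𝒵] {P : Measure Ω}

lemma measurable_block (hZ : ∀ t, Measurable (Z t)) (a : ℕ) (c : ℤ) :
    Measurable (block Z a c) :=
  measurable_pi_lambda _ fun _ => hZ _

lemma measurable_blocks (hZ : ∀ t, Measurable (Z t)) (a : ℕ) (c : ℤ) (m : ℕ) :
    Measurable (blocks Z a c m) :=
  measurable_pi_lambda _ fun _ => measurable_block hZ a _

namespace Stationary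

lemma map_comp_shift (h : Stationary P Z) (hZ : ∀ t, Measurable (Z t)) {β : Type*}
    [MeasurableSpace β] {Φ : (ℤ → 𝒵) → β} (hΦ : Measurable Φ) (s : ℤ) :
    P.map (fun ω => Φ fun t => Z (t + s) ω) = P.map (fun ω => Φ fun t => Z t ω) := by
  have hmap := congrArg (Measure.map Φ) (h s)
  rwa [Measure.map_map hΦ (measurable_pi_lambda _ fun t => hZ (t + s)),
    Measure.map_map hΦ (measurable_pi_lambda _ fun t => hZ t)] at hmap

lemma map_eval_eq (h : Stationary P Z) (hZ : ∀ t, Measurable (Z t)) (t t' : ℤ) :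
    P.map (Z t) = P.map (Z t') := by
  have key (s : ℤ) : P.map (Z s) = P.map (Z 0) := by
    simpa using h.map_comp_shift hZ (measurable_pi_apply 0) s
  rw [key t, key t']

lemma map_block_eq (h : Stationary P Z) (hZ : ∀ t, Measurable (Z t)) (a : ℕ) (c c' : ℤ) :
    P.map (block Z a c) = P.map (block Z a c') := by
  have hΦ : Measurable fun (g : ℤ → 𝒵) (r : Fin a) => g r :=
    measurable_pi_lambda _ fun _ => measurable_pi_apply _
  exact (h.map_comp_shift hZ hΦ c).trans (h.map_comp_shift hZ hΦ c').symm

lemma integral_blockMean [IsProbabilityMeasure P] (h : Stationary P Z)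
    (hZ : ∀ t, Measurable (Z t)) {f : 𝒵 → ℝ} (hf : Measurable f) {lo hi : ℝ}
    (hfb : ∀ z, f z ∈ Set.Icc lo hi) {a : ℕ} (ha : a ≠ 0) (c t : ℤ) :
    ∫ x, blockMean f x ∂(P.map (block Z a c)) = ∫ ω, f (Z t ω) ∂P := by
  have hint (s : ℤ) : Integrable (fun ω => f (Z s ω)) P :=
    .of_mem_Icc lo hi (hf.comp (hZ s)).aemeasurable (ae_of_all _ fun ω => hfb _)
  have hlaw (s : ℤ) : ∫ ω, f (Z s ω) ∂P = ∫ ω, f (Z t ω) ∂P := by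
    rw [← integral_map (hZ s).aemeasurable hf.aestronglyMeasurable, h.map_eval_eq hZ s t,
      integral_map (hZ t).aemeasurable hf.aestronglyMeasurable]
  rw [integral_map (measurable_block hZ a c).aemeasurable
    (measurable_blockMean hf a).aestronglyMeasurable]
  simp only [blockMean, block]
  rw [integral_div, integral_finsetSum _ fun r _ => hint _]
  simp only [hlaw, Finset.sum_const, Finset.card_univ, Fintype.card_fin, nsmul_eq_mul]
  field_simp

lemma compl_setOf_forall_integral_le_subset [IsProbabilityMeasure P] (h : Stationary P Z)
    (hZ : ∀ t, Measurable (Z t)) {ℱ : Finset (𝒵 → ℝ)} (hFmeas : ∀ f ∈ ℱ, Measurable f)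
    {lo hi : ℝ} (hFbdd : ∀ f ∈ ℱ, ∀ z, f z ∈ Set.Icc lo hi) {a : ℕ} (ha : a ≠ 0) (m : ℕ)
    (ε : ℝ) :
    {ω | ∀ f ∈ ℱ, ∫ ω', f (Z 1 ω') ∂P
        ≤ 1 / ((2 * a * m : ℕ) : ℝ) * ∑ t : Fin (2 * a * m), f (Z (((t : ℕ) + 1 : ℕ) : ℤ) ω) + ε}ᶜ
      ⊆ blocks Z a 1 m ⁻¹' largeDeviationSet (P.map (block Z a 1)) ℱ blockMean m ε
        ∪ blocks Z a (a + 1) m ⁻¹' largeDeviationSet (P.map (block Z a 1)) ℱ blockMean m ε := by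
  intro ω hω
  simp only [Set.mem_compl_iff, Set.mem_ofPred_eq, not_forall, not_le] at hω
  obtain ⟨f, hf, hlt⟩ := hω
  rw [one_div_mul_sum_eq_blockMean f ha,
    ← h.integral_blockMean hZ (hFmeas f hf) (hFbdd f hf) ha 1 1] at hlt
  rcases le_sum_sub_or_le_sum_sub_of_lt _ _ hlt with hodd | heven
  · exact Or.inl (Set.mem_biUnion hf hodd)
  · exact Or.inr (Set.mem_biUnion hf heven)

end Stationary

lemma map_blocks_one {a : ℕ} {ρ : Measure (Fin a → 𝒵)} (hZ : ∀ t, Measurable (Z t))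
    (hρ : ∀ c, P.map (block Z a c) = ρ) (c : ℤ) :
    P.map (blocks Z a c 1) = Measure.pi fun _ : Fin 1 => ρ := by
  have hsplit : blocks Z a c 1 = (MeasurableEquiv.funUnique (Fin 1) _).symm ∘ block Z a c := by
    funext ω i
    simp [Subsingleton.elim i 0, blocks]
  rw [hsplit, ← Measure.map_map (MeasurableEquiv.measurable _) (measurable_block hZ a c), hρ,
    (measurePreserving_funUnique ρ (Fin 1)).symm.map_eq]
  rfl

lemma abs_measureReal_map_block_prodMk_blocks_sub_prod_le_betaMix [IsProbabilityMeasure P]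
    (hZ : ∀ t, Measurable (Z t)) (a : ℕ) (c : ℤ) (m : ℕ)
    {A : Set ((Fin a → 𝒵) × (Fin m → Fin a → 𝒵))} (hA : MeasurableSet A) :
    |(P.map fun ω => (block Z a c ω, blocks Z a (2 * a + c) m ω)).real A
      - ((P.map (block Z a c)).prod (P.map (blocks Z a (2 * a + c) m))).real A|
      ≤ betaMix P Z a :=
  -- cut at `t = c + a - 1`: the first block lies in the past, the others start at `c + 2a ≥ t + a`
  abs_measureReal_map_prodMk_sub_prod_le_betaMix hZ (c + a - 1) a
    (G := fun g (r : Fin a) => g ⟨(r : ℕ) + c, by have := r.isLt; omega⟩)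
    (H := fun g (j : Fin m) (r : Fin a) => g ⟨(r : ℕ) + (2 * a * (j : ℕ) + (2 * a + c)), by
      have : (0 : ℤ) ≤ 2 * a * (j : ℕ) := by positivity
      omega⟩)
    (measurable_pi_lambda _ fun _ => measurable_pi_apply _)
    (measurable_pi_lambda _ fun _ => measurable_pi_lambda _ fun _ => measurable_pi_apply _)
    (fun _ => rfl) (fun _ => rfl) hA

lemma abs_measureReal_map_blocks_sub_pi_le [IsProbabilityMeasure P] {a : ℕ}
    {ρ : Measure (Fin a → 𝒵)} (hZ : ∀ t, Measurable (Z t)) (hρ : ∀ c, P.map (block Z a c) = ρ)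
    {m : ℕ} (hm : 1 ≤ m) (c : ℤ) {A : Set (Fin m → Fin a → 𝒵)} (hA : MeasurableSet A) :
    |(P.map (blocks Z a c m)).real A - (Measure.pi fun _ : Fin m => ρ).real A|
      ≤ (m - 1) * betaMix P Z a := by
  have : IsProbabilityMeasure ρ :=
    hρ 0 ▸ Measure.isProbabilityMeasure_map (measurable_block hZ a 0).aemeasurable
  induction m, hm using Nat.le_induction generalizing c with
  | base => simp [map_blocks_one hZ hρ]
  | succ m hm ih =>
    let e := MeasurableEquiv.piFinSuccAbove (fun _ : Fin (m + 1) => Fin a → 𝒵) 0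
    have hpi : (Measure.pi fun _ : Fin (m + 1) => ρ)
        = (ρ.prod (Measure.pi fun _ : Fin m => ρ)).map e.symm :=
      (measurePreserving_piFinSuccAbove (fun _ => ρ) 0).symm.map_eq.symm
    have hA' : MeasurableSet (e.symm ⁻¹' A) := e.symm.measurable hA
    have hmix := abs_measureReal_map_block_prodMk_blocks_sub_prod_le_betaMix (P := P) hZ a c m hA'
    have hdecouple := abs_measureReal_prod_sub_le (ρ := ρ) (fun S hS => ih (2 * a + c) hS) hA'
    rw [hρ c] at hmix
    rw [blocks_succ_eq, ← Measure.map_map e.symm.measurable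
      ((measurable_block hZ a c).prodMk (measurable_blocks hZ a _ m)), hpi,
      map_measureReal_apply e.symm.measurable hA, map_measureReal_apply e.symm.measurable hA]
    calc _ ≤ betaMix P Z a + (m - 1) * betaMix P Z a :=
          (abs_sub_le _ _ _).trans (add_le_add hmix hdecouple)
      _ = ((m + 1 : ℕ) - 1) * betaMix P Z a := by push_cast; ring

end Blocks

theorem slow_rate_bound_quantized_dynamical_general
    {Ω 𝒵 : Type*} [MeasurableSpace Ω] [MeasurableSpace 𝒵]
    (P : Measure Ω) [IsProbabilityMeasure P]
    (Z : ℤ → Ω → 𝒵) (hZmeas : ∀ t, Measurable (Z t))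
    (hstat : Stationary P Z)
    (a μ : ℕ) (ha : 1 ≤ a) (hμ : 1 ≤ μ)
    (n : ℕ) (hn : n = 2 * a * μ)
    (M : ℝ) (hM : 0 < M)
    (B p : ℕ)
    (ℱ : Finset (𝒵 → ℝ))
    (hFmeas : ∀ f ∈ ℱ, Measurable f)
    (hFbdd : ∀ f ∈ ℱ, ∀ z, f z ∈ Set.Icc (0 : ℝ) M)
    (hcard : ℱ.card ≤ 2 ^ (B * p))
    (δ : ℝ) (hδ : δ ∈ Set.Ioo (0 : ℝ) 1)
    (hδ' : 0 < δ - 2 * ((μ : ℝ) - 1) * betaMix P Z a) :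
    1 - δ ≤ (P {ω | ∀ f ∈ ℱ,
        ∫ ω', f (Z 1 ω') ∂P
          ≤ (1 / n) * ∑ t : Fin n, f (Z (((t : ℕ) + 1 : ℕ) : ℤ) ω)
            + M * Real.sqrt (2 * ((B * p + 1) * Real.log 2
                + Real.log (1 / (δ - 2 * ((μ : ℝ) - 1) * betaMix P Z a))) / μ)}).toReal := by
  subst hn
  have ha0 : a ≠ 0 := by omega
  set β := betaMix P Z a
  set δ' := δ - 2 * ((μ : ℝ) - 1) * β
  set ε := M * √(2 * ((B * p + 1) * log 2 + log (1 / δ')) / μ)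
  have hδ'δ : δ' ≤ δ := sub_le_self _ <| mul_nonneg
    (mul_nonneg zero_le_two (sub_nonneg.2 (by exact_mod_cast hμ))) (betaMix_nonneg a)
  set ρ := P.map (block Z a 1)
  have : IsProbabilityMeasure ρ :=
    Measure.isProbabilityMeasure_map (measurable_block hZmeas a 1).aemeasurable
  have hmeas (f) (hf : f ∈ ℱ) := measurable_blockMean (hFmeas f hf) a
  set A := largeDeviationSet ρ ℱ blockMean μ ε
  have hA : MeasurableSet A := measurableSet_largeDeviationSet ρ hmeas μ ε
  have hpiA : (Measure.pi fun _ : Fin μ => ρ).real A ≤ δ' / 2 := by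
    have := measureReal_pi_largeDeviationSet_le_half ρ (m := μ) hmeas hM
      (fun f hf => blockMean_mem_Icc (hFbdd f hf) ha0) hcard (by omega) hδ' (hδ'δ.trans hδ.2.le)
    rwa [Nat.cast_mul] at this
  have hblocks (c : ℤ) : P.real (blocks Z a c μ ⁻¹' A) ≤ δ' / 2 + (μ - 1) * β := by
    rw [← map_measureReal_apply (measurable_blocks hZmeas a c μ) hA]
    linarith [(abs_le.1 (abs_measureReal_map_blocks_sub_pi_le hZmeas
      (fun c => hstat.map_block_eq hZmeas a c 1) hμ c hA)).2]
  refine le_trans ?_ (one_sub_le_measureReal_of_compl_subset_union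
    (hstat.compl_setOf_forall_integral_le_subset hZmeas hFmeas hFbdd ha0 μ ε))
  linarith [hblocks 1, hblocks (a + 1)]

/-- Slow-rate uniform error bound for quantized dynamical models (Theorem 2 in the
paper): with probability at least `1 - δ`, simultaneously for all `f ∈ ℱ`, the risk
`E[f (Z 1)]` is bounded by the empirical risk on `n = 2aμ` points plus
`M √(2((Bp+1)ln 2 + ln(1/δ'))/μ)`, where `δ' = δ - 2(μ-1)β(a) > 0`. -/
theorem slow_rate_bound_quantized_dynamical
    {Ω 𝒵 : Type*} [MeasurableSpace Ω] [MeasurableSpace 𝒵]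
    (P : Measure Ω) [IsProbabilityMeasure P]
    (Z : ℤ → Ω → 𝒵) (hZmeas : ∀ t, Measurable (Z t))
    (hstat : Stationary P Z)
    (a μ : ℕ) (ha : 1 ≤ a) (hμ : 1 ≤ μ)
    (n : ℕ) (hn : n = 2 * a * μ)
    (M : ℝ) (hM : 0 < M)
    (B p : ℕ) (hB : 0 < B) (hp : 0 < p)
    (ℱ : Finset (𝒵 → ℝ))
    (hFmeas : ∀ f ∈ ℱ, Measurable f)
    (hFbdd : ∀ f ∈ ℱ, ∀ z, f z ∈ Set.Icc (0 : ℝ) M)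
    (hcard : ℱ.card ≤ 2 ^ (B * p))
    (δ : ℝ) (hδ : δ ∈ Set.Ioo (0 : ℝ) 1)
    (hδ' : 0 < δ - 2 * ((μ : ℝ) - 1) * betaMix P Z a) :
    1 - δ ≤ (P {ω | ∀ f ∈ ℱ,
        ∫ ω', f (Z 1 ω') ∂P
          ≤ (1 / n) * ∑ t : Fin n, f (Z (((t : ℕ) + 1 : ℕ) : ℤ) ω)
            + M * Real.sqrt (2 * ((B * p + 1) * Real.log 2
                + Real.log (1 / (δ - 2 * ((μ : ℝ) - 1) * betaMix P Z a))) / μ)}).toReal :=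
  slow_rate_bound_quantized_dynamical_general P Z hZmeas hstat a μ ha hμ n hn M hM B p ℱ hFmeas
    hFbdd hcard δ hδ hδ'
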